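/- Let G be a Monge DAG on {s,...,N}, (m,n) a lattice point (n ∈ [s+1,N], 1 ≤ m ≤ n-s), and (v_0,...,v_m) a shortest m-link s-n path. Define Λ(k,j) = [δ(k-1,j), δ(k,j)] where δ(k,j) = f(k+1,j) - f(k,j) (infinite endpoints excluded). Then Λ(1,v_1) ⊇ Λ(2,v_2) ⊇ ... ⊇ Λ(m,v_m); that is, for each 1 ≤ i < m, every λ ∈ Λ(i+1,v_{i+1}) lies in Λ(i,v_i). -/

import Mathlib

/-- A Monge (submodular) edge-length function on the complete DAG on `{s,...,N}`. -/
def IsMonge (s N : ℕ) (c : ℕ → ℕ → ℝ) : Prop :=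
  ∀ i₁ i₂ j₂ j₁ : ℕ, s ≤ i₁ → i₁ < i₂ → i₂ < j₂ → j₂ < j₁ → j₁ ≤ N →
    c i₁ j₂ + c i₂ j₁ ≤ c i₁ j₁ + c i₂ j₂

/-- `v 0, v 1, ..., v m` is an `m`-link path from `a` to `b` inside `{s,...,N}`. -/
def IsPath (s N a b m : ℕ) (v : ℕ → ℕ) : Prop :=
  v 0 = a ∧ v m = b ∧ (∀ k < m, v k < v (k + 1)) ∧ s ≤ a ∧ b ≤ N

/-- The length of the `m`-link path `v 0, ..., v m` under edge lengths `c`. -/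
def pathLen (c : ℕ → ℕ → ℝ) (m : ℕ) (v : ℕ → ℕ) : ℝ :=
  ∑ k ∈ Finset.range m, c (v k) (v (k + 1))

/-- The set of lengths of `m`-link `a`-`b` paths in the complete DAG on `{s,...,N}`. -/
def pathLens (s N a b m : ℕ) (c : ℕ → ℕ → ℝ) : Set ℝ :=
  {x | ∃ v, IsPath s N a b m v ∧ pathLen c m v = x}

/-- The set of link counts of shortest `s`-`n` paths in `G(lam)`
    (the graph with `lam` subtracted from every edge length). -/
def DSet (s N n : ℕ) (c : ℕ → ℕ → ℝ) (lam : ℝ) : Set ℕ :=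
  {m | ∃ v, IsPath s N s n m v ∧
    ∀ m' w, IsPath s N s n m' w →
      pathLen c m v - m * lam ≤ pathLen c m' w - m' * lam}

/-- The set of lengths of all `s`-`n` paths (any number of links). -/
def allLens (s N n : ℕ) (c : ℕ → ℕ → ℝ) : Set ℝ :=
  {x | ∃ m v, IsPath s N s n m v ∧ pathLen c m v = x}

/-!
Let `v` be a shortest `m`-link `s`-`n` path. Replacing a prefix of `v` by a cheaper path with
the same number of links would give a cheaper `m`-link path, so every prefix of `v` is itself a
shortest path with its number of links. Now suppose `G(λ)` has a shortest `s`-`v(i+1)` path `p`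
with `i + 1` links; the prefix `v 0, …, v (i+1)` is no longer than `p`, hence also shortest in
`G(λ)`. Any `s`-`v i` path `w` extends by the edge `(v i, v (i+1))` to an `s`-`v(i+1)` path, and
comparing this extension with the prefix of `v` in `G(λ)` cancels the common last edge: the
prefix `v 0, …, v i` is a shortest `s`-`v i` path in `G(λ)` with `i` links.
-/

section Paths

variable {s N a b m k : ℕ} {c : ℕ → ℕ → ℝ} {v u : ℕ → ℕ}

lemma pathLen_congr {w : ℕ → ℕ} (h : ∀ j ≤ m, v j = w j) : pathLen c m v = pathLen c m w :=
  Finset.sum_congr rfl fun j hj => by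
    have := Finset.mem_range.mp hj
    rw [h j (by omega), h (j + 1) (by omega)]

lemma pathLen_succ : pathLen c (m + 1) v = pathLen c m v + c (v m) (v (m + 1)) :=
  Finset.sum_range_succ _ _

lemma IsPath.le_target (hv : IsPath s N a b m v) (hk : k ≤ m) : v k ≤ b := by
  obtain ⟨-, hvm, hinc, -, -⟩ := hv
  suffices ∀ j, k ≤ j → j ≤ m → v k ≤ v j from hvm ▸ this m hk le_rfl
  intro j hkj hjm
  induction j, hkj using Nat.le_induction with
  | base => exact le_rfl
  | succ j _ ih => exact (ih (by omega)).trans (hinc j (by omega)).le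

lemma IsPath.prefix (hv : IsPath s N a b m v) (hk : k ≤ m) : IsPath s N a (v k) k v :=
  ⟨hv.1, rfl, fun j hj => hv.2.2.1 j (by omega), hv.2.2.2.1, (hv.le_target hk).trans hv.2.2.2.2⟩

def splice (u v : ℕ → ℕ) (k : ℕ) : ℕ → ℕ := fun j => if j ≤ k then u j else v j

lemma IsPath.splice (hv : IsPath s N a b m v) (hu : IsPath s N a (v k) k u) (hk : k ≤ m) :
    IsPath s N a b m (splice u v k) := by
  obtain ⟨hu0, huk, huinc, -, -⟩ := hu
  obtain ⟨hv0, hvm, hvinc, ha, hb⟩ := hv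
  refine ⟨by simp [_root_.splice, hu0], ?_, fun j hj => ?_, ha, hb⟩
  · rcases hk.eq_or_lt with rfl | hk
    · simp [_root_.splice, huk, hvm]
    · simp [_root_.splice, hvm, hk.not_ge]
  · unfold _root_.splice
    rcases lt_trichotomy j k with hjk | rfl | hjk
    · simpa [hjk.le, Nat.succ_le_of_lt hjk] using huinc j hjk
    · simpa [huk] using hvinc j hj
    · simpa [hjk.not_ge, (hjk.trans (Nat.lt_succ_self j)).not_ge] using hvinc j hj

lemma pathLen_splice (huk : u k = v k) (hk : k ≤ m) :
    pathLen c m (splice u v k) + pathLen c k v = pathLen c k u + pathLen c m v := by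
  have hsplit : ∀ w, pathLen c m w =
      pathLen c k w + ∑ j ∈ Finset.Ico k m, c (w j) (w (j + 1)) := fun w =>
    (Finset.sum_range_add_sum_Ico _ hk).symm
  have hhead : pathLen c k (splice u v k) = pathLen c k u :=
    pathLen_congr fun j hj => if_pos hj
  have htail : ∑ j ∈ Finset.Ico k m, c (splice u v k j) (splice u v k (j + 1)) =
      ∑ j ∈ Finset.Ico k m, c (v j) (v (j + 1)) := by
    refine Finset.sum_congr rfl fun j hj => ?_
    have hkj := (Finset.mem_Ico.mp hj).1
    have hv_j : splice u v k j = v j := by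
      rcases hkj.eq_or_lt with rfl | hlt
      · simp [splice, huk]
      · simp [splice, hlt.not_ge]
    rw [hv_j, show splice u v k (j + 1) = v (j + 1) from if_neg (by omega)]
  rw [hsplit (splice u v k), hsplit v, hhead, htail]
  ring

lemma IsPath.pathLen_prefix_le (hv : IsPath s N a b m v)
    (hopt : ∀ w, IsPath s N a b m w → pathLen c m v ≤ pathLen c m w) (hk : k ≤ m)
    (hu : IsPath s N a (v k) k u) : pathLen c k v ≤ pathLen c k u := by
  have := hopt _ (hv.splice hu hk)
  have := pathLen_splice (c := c) hu.2.1 hk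
  linarith

lemma IsPath.extend (hv : IsPath s N a b m v) {b' : ℕ} (hbb' : b < b') (hb' : b' ≤ N) :
    IsPath s N a b' (m + 1) (Function.update v (m + 1) b') := by
  obtain ⟨hv0, hvm, hinc, ha, -⟩ := hv
  refine ⟨by simpa using hv0, by simp, fun j hj => ?_, ha, hb'⟩
  rcases Nat.lt_succ_iff_lt_or_eq.mp hj with hj | rfl
  · simpa [Function.update_of_ne (show j ≠ m + 1 by omega),
      Function.update_of_ne (show j + 1 ≠ m + 1 by omega)] using hinc j hj
  · simpa [hvm] using hbb'

lemma pathLen_update_succ (b' : ℕ) :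
    pathLen c (m + 1) (Function.update v (m + 1) b') = pathLen c m v + c (v m) b' := by
  rw [pathLen_succ, Function.update_self, Function.update_of_ne (by omega)]
  congr 1
  exact pathLen_congr fun j hj => Function.update_of_ne (by omega) _ _

end Paths

lemma mem_DSet_of_succ_mem {s N b i : ℕ} {c : ℕ → ℕ → ℝ} {lam : ℝ} {v : ℕ → ℕ}
    (hv : IsPath s N s b (i + 1) v)
    (hopt : ∀ u, IsPath s N s b (i + 1) u → pathLen c (i + 1) v ≤ pathLen c (i + 1) u)
    (hmem : i + 1 ∈ DSet s N b c lam) : i ∈ DSet s N (v i) c lam := by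
  obtain ⟨p, hp, hpopt⟩ := hmem
  refine ⟨v, hv.prefix (Nat.le_succ i), fun m' w hw => ?_⟩
  have hvi : v i < b := hv.2.1 ▸ hv.2.2.1 i (Nat.lt_succ_self i)
  have hext := hpopt (m' + 1) _ (hw.extend hvi hv.2.2.2.2)
  have hvp := hopt p hp
  rw [pathLen_update_succ, hw.2.1] at hext
  rw [pathLen_succ, hv.2.1] at hvp
  push_cast at hext ⊢
  linarith

theorem stmt13_general (s N n m : ℕ) (c : ℕ → ℕ → ℝ)
    (v : ℕ → ℕ) (hv : IsPath s N s n m v)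
    (hopt : ∀ w, IsPath s N s n m w → pathLen c m v ≤ pathLen c m w) :
    ∀ i, 1 ≤ i → i < m → ∀ lam : ℝ,
      (i + 1) ∈ DSet s N (v (i + 1)) c lam → i ∈ DSet s N (v i) c lam := by
  intro i _ him lam hmem
  exact mem_DSet_of_succ_mem (hv.prefix him)
    (fun u hu => hv.pathLen_prefix_le hopt him hu) hmem

/-- Nested intervals along a shortest `m`-link path: if `lam` admits a shortest
`s`-`v(i+1)` path with `i+1` links in `G(lam)`, then it admits a shortest
`s`-`v i` path with `i` links, i.e. `Λ(i+1, v(i+1)) ⊆ Λ(i, v i)`. -/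
theorem stmt13 (s N n m : ℕ) (c : ℕ → ℕ → ℝ) (hc : IsMonge s N c)
    (hn1 : s + 1 ≤ n) (hn2 : n ≤ N) (hm1 : 1 ≤ m) (hm2 : s + m ≤ n)
    (v : ℕ → ℕ) (hv : IsPath s N s n m v)
    (hopt : ∀ w, IsPath s N s n m w → pathLen c m v ≤ pathLen c m w) :
    ∀ i, 1 ≤ i → i < m → ∀ lam : ℝ,
      (i + 1) ∈ DSet s N (v (i + 1)) c lam → i ∈ DSet s N (v i) c lam :=
  stmt13_general s N n m c v hv hopt
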